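/- arXiv:2110.02585 — 2 statements merged into one kernel-verified Lean document; each statement's English description precedes it below -/
import Mathlib

section
/- An SCNN layer y = σ(Hx) with an odd elementwise nonlinearity σ is orientation equivariant: after an orientation change by diagonal ±1 matrices D₁, D₂ (with D₀ = I) applied as B₁ ↦ D₀B₁D₁, B₂ ↦ D₁B₂D₂ and x ↦ D₁x, the new output equals D₁y. -/
open Matrix

/-- The simplicial convolutional filter
`H = ε I + Σ_{l₁=1}^{L₁} α l₁ (B₁ᵀB₁)^{l₁} + Σ_{l₂=1}^{L₂} β l₂ (B₂B₂ᵀ)^{l₂}`. -/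
def simplicialFilter {N₀ N₁ N₂ : ℕ} (B₁ : Matrix (Fin N₀) (Fin N₁) ℝ)
    (B₂ : Matrix (Fin N₁) (Fin N₂) ℝ) (ε : ℝ) (α β : ℕ → ℝ) (L₁ L₂ : ℕ) :
    Matrix (Fin N₁) (Fin N₁) ℝ :=
  ε • (1 : Matrix (Fin N₁) (Fin N₁) ℝ)
    + ∑ l ∈ Finset.Icc 1 L₁, α l • (B₁ᵀ * B₁) ^ l
    + ∑ l ∈ Finset.Icc 1 L₂, β l • (B₂ * B₂ᵀ) ^ l

lemma diag_sq_one {n : ℕ} (d : Fin n → ℝ) (hd : ∀ i, d i = 1 ∨ d i = -1) :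
    Matrix.diagonal d * Matrix.diagonal d = 1 := by
  rw [Matrix.diagonal_mul_diagonal]
  have : (fun i => d i * d i) = fun _ => (1 : ℝ) :=
    funext fun i => by rcases hd i with h | h <;> simp [h]
  rw [this, Matrix.diagonal_one]

lemma my_conj_pow {n : ℕ} (D A : Matrix (Fin n) (Fin n) ℝ) (hD : D * D = 1) (l : ℕ) :
    (D * A * D) ^ l = D * A ^ l * D := by
  induction l with
  | zero => simp [hD]
  | succ k ih =>
      rw [pow_succ, pow_succ, ih]
      rw [show D * A ^ k * D * (D * A * D) = D * A ^ k * (D * D) * A * D by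
        noncomm_ring]
      rw [hD]; noncomm_ring

/-- An SCNN layer `y = σ(Hx)` with an odd elementwise nonlinearity is orientation
equivariant: after an orientation change by diagonal `±1` matrices `D₁, D₂`
(`D₀ = I`), the new output is `D₁ y`. -/
theorem scnn_layer_orientation_equivariant {N₀ N₁ N₂ : ℕ}
    (B₁ : Matrix (Fin N₀) (Fin N₁) ℝ) (B₂ : Matrix (Fin N₁) (Fin N₂) ℝ)
    (ε : ℝ) (α β : ℕ → ℝ) (L₁ L₂ : ℕ) (σ : ℝ → ℝ) (hσ : ∀ t, σ (-t) = -σ t)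
    (d₁ : Fin N₁ → ℝ) (d₂ : Fin N₂ → ℝ)
    (hd₁ : ∀ i, d₁ i = 1 ∨ d₁ i = -1) (hd₂ : ∀ i, d₂ i = 1 ∨ d₂ i = -1)
    (x : Fin N₁ → ℝ) :
    (fun i => σ (((simplicialFilter (B₁ * Matrix.diagonal d₁)
        (Matrix.diagonal d₁ * B₂ * Matrix.diagonal d₂) ε α β L₁ L₂).mulVec
        ((Matrix.diagonal d₁).mulVec x)) i))
      = (Matrix.diagonal d₁).mulVec
        (fun i => σ (((simplicialFilter B₁ B₂ ε α β L₁ L₂).mulVec x) i)) := by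
  set D := Matrix.diagonal d₁ with hDdef
  have hD : D * D = 1 := diag_sq_one d₁ hd₁
  have hD2 : Matrix.diagonal d₂ * (Matrix.diagonal d₂)ᵀ = 1 := by
    rw [Matrix.diagonal_transpose]; exact diag_sq_one d₂ hd₂
  have hDt : Dᵀ = D := by rw [hDdef, Matrix.diagonal_transpose]
  have hfilter : simplicialFilter (B₁ * D) (D * B₂ * Matrix.diagonal d₂) ε α β L₁ L₂
      = D * simplicialFilter B₁ B₂ ε α β L₁ L₂ * D := by
    unfold simplicialFilter
    have h1 : (B₁ * D)ᵀ * (B₁ * D) = D * (B₁ᵀ * B₁) * D := by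
      rw [Matrix.transpose_mul, hDt]; simp [Matrix.mul_assoc]
    have h22 : Matrix.diagonal d₂ * Matrix.diagonal d₂ = 1 := diag_sq_one d₂ hd₂
    have h2 : (D * B₂ * Matrix.diagonal d₂) * (D * B₂ * Matrix.diagonal d₂)ᵀ
        = D * (B₂ * B₂ᵀ) * D := by
      rw [Matrix.transpose_mul, Matrix.transpose_mul, hDt, Matrix.diagonal_transpose,
        Matrix.mul_assoc (D * B₂), ← Matrix.mul_assoc (Matrix.diagonal d₂), h22,
        Matrix.one_mul]
      simp [Matrix.mul_assoc]
    rw [h1, h2]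
    simp only [my_conj_pow _ _ hD]
    rw [Matrix.mul_add, Matrix.mul_add, Matrix.add_mul, Matrix.add_mul]
    congr 1
    · congr 1
      · rw [Matrix.mul_smul, Matrix.smul_mul, Matrix.mul_one, hD]
      · rw [Finset.mul_sum, Finset.sum_mul]
        exact Finset.sum_congr rfl fun l _ => by
          rw [Matrix.mul_smul, Matrix.smul_mul]
    · rw [Finset.mul_sum, Finset.sum_mul]
      exact Finset.sum_congr rfl fun l _ => by
        rw [Matrix.mul_smul, Matrix.smul_mul]
  rw [hfilter]
  have hmv : (D * simplicialFilter B₁ B₂ ε α β L₁ L₂ * D).mulVec (D.mulVec x)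
      = D.mulVec ((simplicialFilter B₁ B₂ ε α β L₁ L₂).mulVec x) := by
    have hxx : D.mulVec (D.mulVec x) = x := by
      rw [Matrix.mulVec_mulVec, hD, Matrix.one_mulVec]
    rw [← Matrix.mulVec_mulVec, hxx, ← Matrix.mulVec_mulVec]
  rw [hmv]
  funext i
  have hmd : ∀ (v : Fin N₁ → ℝ) (j : Fin N₁), D.mulVec v j = d₁ j * v j := by
    intro v j; simp [hDdef, Matrix.mulVec_diagonal]
  rw [hmd, hmd]
  rcases hd₁ i with h | h <;> simp [h, hσ]
end

section
/- Frequency response of the simplicial filter: assume B₁B₂ = 0 and let u be a unit eigenvector of L₁ with eigenvalue λ. If λ = 0 then Hu = εu; if u ∈ im(B₁ᵀ) then Hu = (ε + Σ_{l₁=1}^{L₁} α_{l₁}λ^{l₁})u; if u ∈ im(B₂) then Hu = (ε + Σ_{l₂=1}^{L₂} β_{l₂}λ^{l₂})u, where H = εI + Σ α_{l₁}(B₁ᵀB₁)^{l₁} + Σ β_{l₂}(B₂B₂ᵀ)^{l₂}. -/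
open Matrix

private lemma pow_mulVec_eig {n : ℕ} {M : Matrix (Fin n) (Fin n) ℝ} {u : Fin n → ℝ} {c : ℝ}
    (h : M *ᵥ u = c • u) (l : ℕ) : (M ^ l) *ᵥ u = c ^ l • u := by
  induction l with
  | zero => simp [Matrix.one_mulVec]
  | succ k ih =>
    rw [pow_succ, ← Matrix.mulVec_mulVec, h, Matrix.mulVec_smul, ih, smul_smul, pow_succ]
    ring_nf

private lemma sum_pow_mulVec {n : ℕ} {M : Matrix (Fin n) (Fin n) ℝ} {u : Fin n → ℝ} {c : ℝ}
    (h : M *ᵥ u = c • u) (γ : ℕ → ℝ) (L : ℕ) :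
    (∑ l ∈ Finset.Icc 1 L, γ l • M ^ l) *ᵥ u = (∑ l ∈ Finset.Icc 1 L, γ l * c ^ l) • u := by
  induction L with
  | zero => simp [Matrix.mulVec]
  | succ k ih =>
    rcases le_or_gt (k+1) 0 with h0 | h0
    · omega
    rw [Finset.sum_Icc_succ_top (by omega), Finset.sum_Icc_succ_top (by omega),
      Matrix.add_mulVec, ih, Matrix.smul_mulVec, pow_mulVec_eig h, add_smul,
      smul_smul]

theorem simplicialFilter_frequency_response_aux {N₀ N₁ N₂ : ℕ}
    (B₁ : Matrix (Fin N₀) (Fin N₁) ℝ) (B₂ : Matrix (Fin N₁) (Fin N₂) ℝ)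
    (ε : ℝ) (α β : ℕ → ℝ) (L₁ L₂ : ℕ) (u : Fin N₁ → ℝ) (a c : ℝ)
    (hA : (B₁ᵀ * B₁) *ᵥ u = a • u) (hC : (B₂ * B₂ᵀ) *ᵥ u = c • u) :
    (ε • (1 : Matrix (Fin N₁) (Fin N₁) ℝ)
      + ∑ l ∈ Finset.Icc 1 L₁, α l • (B₁ᵀ * B₁) ^ l
      + ∑ l ∈ Finset.Icc 1 L₂, β l • (B₂ * B₂ᵀ) ^ l) *ᵥ u
      = (ε + ∑ l ∈ Finset.Icc 1 L₁, α l * a ^ l + ∑ l ∈ Finset.Icc 1 L₂, β l * c ^ l) • u := by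
  rw [Matrix.add_mulVec, Matrix.add_mulVec, sum_pow_mulVec hA, sum_pow_mulVec hC,
    Matrix.smul_mulVec, Matrix.one_mulVec, add_smul, add_smul]

private lemma dot_self_aux {m n : ℕ} (M : Matrix (Fin m) (Fin n) ℝ) (u : Fin n → ℝ) :
    u ⬝ᵥ ((Mᵀ * M) *ᵥ u) = (M *ᵥ u) ⬝ᵥ (M *ᵥ u) := by
  rw [← Matrix.mulVec_mulVec, Matrix.dotProduct_mulVec, Matrix.vecMul_transpose]

private lemma Icc_zero_sum {L : ℕ} (γ : ℕ → ℝ) :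
    ∑ l ∈ Finset.Icc 1 L, γ l * (0:ℝ) ^ l = 0 := by
  apply Finset.sum_eq_zero
  intro l hl
  rw [Finset.mem_Icc] at hl
  rw [zero_pow (by omega), mul_zero]

/-- Frequency response of the simplicial filter on a unit eigenvector `u` of the
Hodge Laplacian `L₁` with eigenvalue `λ`: on the harmonic space the response is
`ε`, on the gradient space it is `ε + Σ α l λ^l`, and on the curl space it is
`ε + Σ β l λ^l`. -/
theorem simplicialFilter_frequency_response {N₀ N₁ N₂ : ℕ}
    (B₁ : Matrix (Fin N₀) (Fin N₁) ℝ) (B₂ : Matrix (Fin N₁) (Fin N₂) ℝ)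
    (hB : B₁ * B₂ = 0) (ε : ℝ) (α β : ℕ → ℝ) (L₁ L₂ : ℕ)
    (u : Fin N₁ → ℝ) (hu : u ⬝ᵥ u = 1) (lam : ℝ)
    (heig : (B₁ᵀ * B₁ + B₂ * B₂ᵀ).mulVec u = lam • u) :
    (lam = 0 → (simplicialFilter B₁ B₂ ε α β L₁ L₂).mulVec u = ε • u) ∧
    ((∃ y : Fin N₀ → ℝ, u = B₁ᵀ.mulVec y) →
      (simplicialFilter B₁ B₂ ε α β L₁ L₂).mulVec u
        = (ε + ∑ l ∈ Finset.Icc 1 L₁, α l * lam ^ l) • u) ∧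
    ((∃ z : Fin N₂ → ℝ, u = B₂.mulVec z) →
      (simplicialFilter B₁ B₂ ε α β L₁ L₂).mulVec u
        = (ε + ∑ l ∈ Finset.Icc 1 L₂, β l * lam ^ l) • u) := by
  have hBt : B₂ᵀ * B₁ᵀ = 0 := by
    rw [← Matrix.transpose_mul, hB, Matrix.transpose_zero]
  refine ⟨?_, ?_, ?_⟩
  · intro hlam
    subst hlam
    rw [zero_smul] at heig
    have hsum : (B₁ *ᵥ u) ⬝ᵥ (B₁ *ᵥ u) + (B₂ᵀ *ᵥ u) ⬝ᵥ (B₂ᵀ *ᵥ u) = 0 := by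
      have h0 : u ⬝ᵥ ((B₁ᵀ * B₁) *ᵥ u) + u ⬝ᵥ ((B₂ * B₂ᵀ) *ᵥ u) = 0 := by
        rw [← dotProduct_add, ← Matrix.add_mulVec, heig, dotProduct_zero]
      have hC' : B₂ * B₂ᵀ = (B₂ᵀ)ᵀ * B₂ᵀ := by rw [Matrix.transpose_transpose]
      rw [hC', dot_self_aux B₁ u, dot_self_aux B₂ᵀ u] at h0
      exact h0
    have h1 : B₁ *ᵥ u = 0 := by
      rw [← dotProduct_self_eq_zero]
      have n1 : (0:ℝ) ≤ (B₁ *ᵥ u) ⬝ᵥ (B₁ *ᵥ u) := Finset.sum_nonneg fun i _ => mul_self_nonneg _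
      have n2 : (0:ℝ) ≤ (B₂ᵀ *ᵥ u) ⬝ᵥ (B₂ᵀ *ᵥ u) := Finset.sum_nonneg fun i _ => mul_self_nonneg _
      linarith
    have h2 : B₂ᵀ *ᵥ u = 0 := by
      rw [← dotProduct_self_eq_zero]
      have n1 : (0:ℝ) ≤ (B₁ *ᵥ u) ⬝ᵥ (B₁ *ᵥ u) := Finset.sum_nonneg fun i _ => mul_self_nonneg _
      have n2 : (0:ℝ) ≤ (B₂ᵀ *ᵥ u) ⬝ᵥ (B₂ᵀ *ᵥ u) := Finset.sum_nonneg fun i _ => mul_self_nonneg _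
      linarith
    have hA : (B₁ᵀ * B₁) *ᵥ u = (0:ℝ) • u := by
      rw [← Matrix.mulVec_mulVec, h1, Matrix.mulVec_zero, zero_smul]
    have hC : (B₂ * B₂ᵀ) *ᵥ u = (0:ℝ) • u := by
      rw [← Matrix.mulVec_mulVec, h2, Matrix.mulVec_zero, zero_smul]
    rw [simplicialFilter, simplicialFilter_frequency_response_aux B₁ B₂ ε α β L₁ L₂ u 0 0 hA hC,
      Icc_zero_sum, Icc_zero_sum, add_zero, add_zero]
  · rintro ⟨y, rfl⟩
    have hC : (B₂ * B₂ᵀ) *ᵥ (B₁ᵀ *ᵥ y) = (0:ℝ) • (B₁ᵀ *ᵥ y) := by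
      rw [Matrix.mulVec_mulVec, Matrix.mul_assoc, hBt, Matrix.mul_zero, Matrix.zero_mulVec,
        zero_smul]
    have hA : (B₁ᵀ * B₁) *ᵥ (B₁ᵀ *ᵥ y) = lam • (B₁ᵀ *ᵥ y) := by
      have := heig
      rw [Matrix.add_mulVec, hC, zero_smul, add_zero] at this
      exact this
    rw [simplicialFilter, simplicialFilter_frequency_response_aux B₁ B₂ ε α β L₁ L₂ _ lam 0 hA hC,
      Icc_zero_sum, add_zero]
  · rintro ⟨z, rfl⟩
    have hA : (B₁ᵀ * B₁) *ᵥ (B₂ *ᵥ z) = (0:ℝ) • (B₂ *ᵥ z) := by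
      rw [Matrix.mulVec_mulVec, Matrix.mul_assoc, hB, Matrix.mul_zero, Matrix.zero_mulVec,
        zero_smul]
    have hC : (B₂ * B₂ᵀ) *ᵥ (B₂ *ᵥ z) = lam • (B₂ *ᵥ z) := by
      have := heig
      rw [Matrix.add_mulVec, hA, zero_smul, zero_add] at this
      exact this
    rw [simplicialFilter, simplicialFilter_frequency_response_aux B₁ B₂ ε α β L₁ L₂ _ 0 lam hA hC,
      Icc_zero_sum, add_zero]
end
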